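/- arXiv:1711.07556 — 9 statements merged into one kernel-verified Lean document; each statement's English description precedes it below -/
import Mathlib

section
/- Assume ker(τ) is dense in H. Then there exists a densely defined self-adjoint operator A_Λ in H (a linear map defined on a dense subspace dom(A_Λ) ⊆ H which coincides with its adjoint) which is a self-adjoint extension of the restriction of A₀ to ker(τ) and whose resolvent at every point of Z_Λ is R^Λ: (i) every u ∈ dom(A₀) with τu = 0 satisfies u ∈ dom(A_Λ) and A_Λu = A₀u; (ii) for every z ∈ Z_Λ and every v ∈ H, R^Λ_z v ∈ dom(A_Λ) and z·R^Λ_z v − A_Λ R^Λ_z v = v; (iii) for every z ∈ Z_Λ and every u ∈ dom(A_Λ), R^Λ_z(z·u − A_Λ u) = u. -/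
/-!
The Kreĭn family `z ↦ R^Λ_z` is a pseudo-resolvent: expanding the formula and using the
corresponding identities for `R⁰`, `τ R⁰`, `G` and `Λ` gives the resolvent identity
`R^Λ_w - R^Λ_z = (z - w) R^Λ_w R^Λ_z`, and `(R^Λ_z)* = R^Λ_{z̄}`. By the resolvent identity
`ker R^Λ_{z₀} = ker R^Λ_{z̄₀}`, which by the adjoint relation is orthogonal to `ran R^Λ_{z₀}`;
this range contains `ker τ`, hence is dense, so `R^Λ_{z₀}` is injective and
`A_Λ := z₀ - (R^Λ_{z₀})⁻¹` on `ran R^Λ_{z₀}` is well defined. The resolvent identity propagates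
`(z₀ - A_Λ)⁻¹ = R^Λ_{z₀}` to all of `Z_Λ`, and `A_Λ` is self-adjoint because it is symmetric
with both `z₀ - A_Λ` and `z̄₀ - A_Λ` surjective.
-/

open ComplexConjugate
open scoped InnerProductSpace

section

variable {𝕜 E F : Type*} [CommRing 𝕜] [AddCommGroup E] [Module 𝕜 E] [AddCommGroup F] [Module 𝕜 F]

def IsPseudoResolvent (S : Set 𝕜) (R : 𝕜 → E →ₗ[𝕜] E) : Prop :=
  ∀ z ∈ S, ∀ w ∈ S, ∀ v, R w v - R z v = (z - w) • R w (R z v)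

section

variable {S : Set 𝕜} {R : 𝕜 → E →ₗ[𝕜] E}

theorem IsPseudoResolvent.sub_apply_of_eq_comp (hR : IsPseudoResolvent S R) {D : Submodule 𝕜 E}
    (hRD : ∀ z ∈ S, ∀ v, R z v ∈ D) (τ : D →ₗ[𝕜] F) {T : 𝕜 → E →ₗ[𝕜] F}
    (hT : ∀ z ∈ S, ∀ v (hv : R z v ∈ D), T z v = τ ⟨R z v, hv⟩) :
    ∀ z ∈ S, ∀ w ∈ S, ∀ v, T w v - T z v = (z - w) • T w (R z v) := by
  intro z hz w hw v
  rw [hT w hw v (hRD w hw v), hT z hz v (hRD z hz v), hT w hw _ (hRD w hw _), ← τ.map_sub,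
    ← τ.map_smul]
  exact congrArg τ (Subtype.ext (hR z hz w hw v))

theorem IsPseudoResolvent.add_comp_comp (hR : IsPseudoResolvent S R) {G : 𝕜 → F →ₗ[𝕜] E}
    {Λ : 𝕜 → F →ₗ[𝕜] F} {T : 𝕜 → E →ₗ[𝕜] F}
    (hT : ∀ z ∈ S, ∀ w ∈ S, ∀ v, T w v - T z v = (z - w) • T w (R z v))
    (hG : ∀ z ∈ S, ∀ w ∈ S, ∀ ξ, G w ξ - G z ξ = (z - w) • R w (G z ξ))
    (hΛ : ∀ z ∈ S, ∀ w ∈ S, ∀ η, Λ w η - Λ z η = (z - w) • Λ w (T w (G z (Λ z η)))) :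
    IsPseudoResolvent S fun z => R z + G z ∘ₗ Λ z ∘ₗ T z := by
  intro z hz w hw v
  have hT' := congrArg (G w ∘ₗ Λ w) (hT z hz w hw v)
  have hΛ' := congrArg (G w) (hΛ z hz w hw (T z v))
  simp only [LinearMap.comp_apply, LinearMap.map_sub, LinearMap.map_smul] at hT' hΛ'
  simp only [LinearMap.add_apply, LinearMap.comp_apply, LinearMap.map_add, smul_add]
  linear_combination (norm := module) hR z hz w hw v + hG z hz w hw (Λ z (T z v)) + hT' + hΛ'

end

namespace LinearPMap

structure IsResolvent (A : E →ₗ.[𝕜] E) (z : 𝕜) (R : E →ₗ[𝕜] E) : Prop where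
  right_inv : ∀ v, ∃ hv : R v ∈ A.domain, z • R v - A ⟨R v, hv⟩ = v
  left_inv : ∀ u : A.domain, R (z • (u : E) - A u) = u

variable {A : E →ₗ.[𝕜] E} {z w : 𝕜} {R R' : E →ₗ[𝕜] E}

theorem IsResolvent.exists_mem_domain_of_apply_eq (h : A.IsResolvent z R) {v x : E}
    (hx : R v = x) : ∃ hx' : x ∈ A.domain, A ⟨x, hx'⟩ = z • x - v := by
  subst hx
  obtain ⟨hv, h⟩ := h.right_inv v
  exact ⟨hv, eq_sub_of_add_eq (sub_eq_iff_eq_add'.mp h).symm⟩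

theorem IsResolvent.exists_mem_domain_apply_eq {B : E →ₗ.[𝕜] E} (h : A.IsResolvent z R)
    (u : B.domain) (hu : R (z • (u : E) - B u) = u) :
    ∃ hu' : (u : E) ∈ A.domain, A ⟨u, hu'⟩ = B u := by
  obtain ⟨hmem, hAu⟩ := h.exists_mem_domain_of_apply_eq hu
  exact ⟨hmem, hAu.trans (sub_sub_cancel _ _)⟩

theorem IsResolvent.sub_apply (hz : A.IsResolvent z R) (hw : A.IsResolvent w R') (v : E) :
    R' v - R v = (z - w) • R' (R v) := by
  obtain ⟨hv, h⟩ := hz.right_inv v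
  calc R' v - R v = R' (z • R v - A ⟨R v, hv⟩) - R' (w • R v - A ⟨R v, hv⟩) := by
        rw [h, hw.left_inv ⟨R v, hv⟩]
    _ = (z - w) • R' (R v) := by
        rw [← R'.map_sub, ← R'.map_smul, sub_sub_sub_cancel_right, sub_smul]

theorem isPseudoResolvent_of_isResolvent {S : Set 𝕜} {R : 𝕜 → E →ₗ[𝕜] E}
    (h : ∀ z ∈ S, A.IsResolvent z (R z)) : IsPseudoResolvent S R :=
  fun z hz w hw => (h z hz).sub_apply (h w hw)

theorem IsResolvent.of_isPseudoResolvent {S : Set 𝕜} {R : 𝕜 → E →ₗ[𝕜] E}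
    (hR : IsPseudoResolvent S R) (hz : z ∈ S) (hw : w ∈ S) (h : A.IsResolvent z (R z)) :
    A.IsResolvent w (R w) where
  right_inv v := by
    have hRw : R z (v + (z - w) • R w v) = R w v := by
      rw [LinearMap.map_add, LinearMap.map_smul]
      linear_combination (norm := module) hR w hw z hz v
    obtain ⟨hmem, hA⟩ := h.exists_mem_domain_of_apply_eq hRw
    exact ⟨hmem, by rw [hA]; module⟩
  left_inv u := by
    have hzw := hR z hz w hw (z • (u : E) - A u)
    rw [h.left_inv u] at hzw
    calc R w (w • (u : E) - A u) = R w (z • (u : E) - A u) - (z - w) • R w u := by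
          rw [← LinearMap.map_smul, ← LinearMap.map_sub]; congr 1; module
      _ = u := by linear_combination (norm := module) hzw

noncomputable def ofResolvent (z : 𝕜) (R : E →ₗ[𝕜] E) (hR : Function.Injective R) : E →ₗ.[𝕜] E :=
  ⟨LinearMap.range R, z • (LinearMap.range R).subtype -
    ((LinearEquiv.ofInjective R hR).symm : LinearMap.range R →ₗ[𝕜] E)⟩

theorem isResolvent_ofResolvent (hR : Function.Injective R) :
    (ofResolvent z R hR).IsResolvent z R where
  right_inv v := ⟨LinearMap.mem_range_self R v, by
    change z • R v - (z • R v - (LinearEquiv.ofInjective R hR).symm ⟨R v, _⟩) = v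
    rw [sub_sub_cancel, LinearEquiv.symm_apply_eq]
    rfl⟩
  left_inv u := by
    change R (z • (u : E) - (z • (u : E) - (LinearEquiv.ofInjective R hR).symm u)) = u
    rw [sub_sub_cancel]
    exact congrArg Subtype.val ((LinearEquiv.ofInjective R hR).apply_symm_apply u)

end LinearPMap

end

namespace LinearPMap

variable {H : Type*} [NormedAddCommGroup H] [InnerProductSpace ℂ H] [CompleteSpace H]
  {A : H →ₗ.[ℂ] H} {z : ℂ} {R R' : H →L[ℂ] H}

theorem IsFormalAdjoint.adjoint_eq_of_isResolvent (hA : A.IsFormalAdjoint A)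
    (hR : A.IsResolvent z R) (hR' : A.IsResolvent (conj z) R') :
    ContinuousLinearMap.adjoint R = R' := by
  refine ((ContinuousLinearMap.eq_adjoint_iff R' R).mpr fun x y => ?_).symm
  obtain ⟨hx, hx'⟩ := hR'.right_inv x
  obtain ⟨hy, hy'⟩ := hR.right_inv y
  calc ⟪R' x, y⟫_ℂ = ⟪R' x, z • R y - A ⟨R y, hy⟩⟫_ℂ := congrArg _ hy'.symm
    _ = ⟪conj z • R' x - A ⟨R' x, hx⟩, R y⟫_ℂ := by
        rw [inner_sub_left, inner_sub_right, inner_smul_left, inner_smul_right, Complex.conj_conj,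
          hA ⟨R' x, hx⟩ ⟨R y, hy⟩]
    _ = ⟪x, R y⟫_ℂ := congrArg (⟪·, R y⟫_ℂ) hx'

theorem isFormalAdjoint_self_of_isResolvent (hR : A.IsResolvent z R)
    (hR' : A.IsResolvent (conj z) R') (hadj : ContinuousLinearMap.adjoint R = R') :
    A.IsFormalAdjoint A := by
  intro x y
  have key : ⟪z • (x : H) - A x, y⟫_ℂ = ⟪(x : H), conj z • (y : H) - A y⟫_ℂ :=
    calc ⟪z • (x : H) - A x, y⟫_ℂ = ⟪z • (x : H) - A x, R' (conj z • (y : H) - A y)⟫_ℂ :=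
          congrArg _ (hR'.left_inv y).symm
      _ = ⟪R (z • (x : H) - A x), conj z • (y : H) - A y⟫_ℂ := by
          rw [← hadj, ContinuousLinearMap.adjoint_inner_right]
      _ = _ := congrArg (⟪·, _⟫_ℂ) (hR.left_inv x)
  rw [inner_sub_left, inner_sub_right, inner_smul_left, inner_smul_right] at key
  exact sub_right_inj.mp key

theorem adjoint_domain_le_of_isResolvent (hdense : Dense (A.domain : Set H))
    (hR : A.IsResolvent z R) (hR' : A.IsResolvent (conj z) R')
    (hadj : ContinuousLinearMap.adjoint R = R') : A.adjoint.domain ≤ A.domain := by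
  intro v hv
  set c := conj z • v - A.adjoint ⟨v, hv⟩
  have hvc : R' c = v := by
    refine ext_inner_right ℂ fun d => ?_
    obtain ⟨hd, hd'⟩ := hR.right_inv d
    calc ⟪R' c, d⟫_ℂ = ⟪c, R d⟫_ℂ := by rw [← hadj, ContinuousLinearMap.adjoint_inner_left]
      _ = ⟪v, z • R d - A ⟨R d, hd⟩⟫_ℂ := by
          rw [inner_sub_left, inner_sub_right, inner_smul_left, inner_smul_right, Complex.conj_conj,
            adjoint_isFormalAdjoint hdense ⟨v, hv⟩ ⟨R d, hd⟩]
      _ = ⟪v, d⟫_ℂ := congrArg _ hd'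
  obtain ⟨hmem, -⟩ := hR'.right_inv c
  exact hvc ▸ hmem

theorem adjoint_eq_self_of_isResolvent (hdense : Dense (A.domain : Set H))
    (hR : A.IsResolvent z R) (hR' : A.IsResolvent (conj z) R')
    (hadj : ContinuousLinearMap.adjoint R = R') : A.adjoint = A := by
  have hle := (isFormalAdjoint_self_of_isResolvent hR hR' hadj).le_adjoint hdense
  exact (eq_of_le_of_domain_eq hle
    (le_antisymm hle.1 (adjoint_domain_le_of_isResolvent hdense hR hR' hadj))).symm

end LinearPMap

section

variable {H 𝔥 : Type*} [NormedAddCommGroup H] [InnerProductSpace ℂ H] [CompleteSpace H]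
  [NormedAddCommGroup 𝔥] [InnerProductSpace ℂ 𝔥] [CompleteSpace 𝔥]

open ContinuousLinearMap

theorem IsPseudoResolvent.injective {S : Set ℂ} {R : ℂ → H →L[ℂ] H}
    (hR : IsPseudoResolvent S fun z => (R z : H →ₗ[ℂ] H)) {z : ℂ} (hz : z ∈ S)
    (hz' : conj z ∈ S) (hadj : adjoint (R z) = R (conj z)) (hdense : Dense (Set.range (R z))) :
    Function.Injective (R z) := by
  refine (injective_iff_map_eq_zero _).mpr fun v hv => ?_
  have hv' : adjoint (R z) v = 0 := by
    simpa [hv, hadj] using hR z hz (conj z) hz' v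
  have hperp : (R z).rangeᗮ = ⊥ := by
    rw [← Submodule.topologicalClosure_eq_top_iff, ← Submodule.dense_iff_topologicalClosure_eq_top]
    exact hdense
  rw [orthogonal_range, LinearMap.ker_eq_bot'] at hperp
  exact hperp v hv'

theorem exists_adjoint_eq_self_isResolvent {S : Set ℂ} {z₀ : ℂ} (hz₀ : z₀ ∈ S)
    (hS : ∀ z ∈ S, conj z ∈ S) {R : ℂ → H →L[ℂ] H}
    (hR : IsPseudoResolvent S fun z => (R z : H →ₗ[ℂ] H))
    (hadj : ∀ z ∈ S, adjoint (R z) = R (conj z)) (hdense : Dense (Set.range (R z₀))) :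
    ∃ A : H →ₗ.[ℂ] H, Dense (A.domain : Set H) ∧ A.adjoint = A ∧
      ∀ z ∈ S, A.IsResolvent z (R z) := by
  set A := LinearPMap.ofResolvent z₀ (R z₀ : H →ₗ[ℂ] H)
    (hR.injective hz₀ (hS z₀ hz₀) (hadj z₀ hz₀) hdense)
  have hA : ∀ z ∈ S, A.IsResolvent z (R z) := fun z hz =>
    (LinearPMap.isResolvent_ofResolvent _).of_isPseudoResolvent hR hz₀ hz
  have hAdense : Dense (A.domain : Set H) := hdense
  exact ⟨A, hAdense, LinearPMap.adjoint_eq_self_of_isResolvent hAdense (hA z₀ hz₀)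
    (hA _ (hS z₀ hz₀)) (hadj z₀ hz₀), hA⟩

theorem adjoint_sub_apply_of_sub_apply {S : Set ℂ} (hS : ∀ z ∈ S, conj z ∈ S)
    {R : ℂ → H →L[ℂ] H} (hadj : ∀ z ∈ S, adjoint (R z) = R (conj z)) {T : ℂ → H →L[ℂ] 𝔥}
    (hT : ∀ z ∈ S, ∀ w ∈ S, ∀ v, T w v - T z v = (z - w) • T w (R z v)) :
    ∀ z ∈ S, ∀ w ∈ S, ∀ ξ, adjoint (T (conj w)) ξ - adjoint (T (conj z)) ξ
      = (z - w) • R w (adjoint (T (conj z)) ξ) := by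
  intro z hz w hw ξ
  have h : T (conj z) - T (conj w) = (conj w - conj z) • (T (conj z) ∘L R (conj w)) :=
    ext (hT (conj w) (hS w hw) (conj z) (hS z hz))
  have h' := congr($(congrArg adjoint h) ξ)
  simp only [map_sub, map_smulₛₗ, adjoint_comp, hadj _ (hS w hw), Complex.conj_conj,
    sub_apply, smul_apply, comp_apply] at h'
  linear_combination (norm := module) -h'


end

open ContinuousLinearMap in
theorem statement0_general
    {H 𝔥 : Type*}
    [NormedAddCommGroup H] [InnerProductSpace ℂ H] [CompleteSpace H]
    [NormedAddCommGroup 𝔥] [InnerProductSpace ℂ 𝔥] [CompleteSpace 𝔥]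
    (A0 : H →ₗ.[ℂ] H)
    (hA0dense : Dense (A0.domain : Set H))
    (hA0sa : A0.adjoint = A0)
    (Z : Set ℂ)
    (R0 : ℂ → H →L[ℂ] H)
    (hRdom : ∀ z, z ∈ Z → ∀ v : H, R0 z v ∈ A0.domain)
    (hRleft : ∀ z ∈ Z, ∀ u : A0.domain, R0 z (z • (u : H) - A0 u) = u)
    (hRright : ∀ z, ∀ hz : z ∈ Z, ∀ v : H,
      z • R0 z v - A0 ⟨R0 z v, hRdom z hz v⟩ = v)
    (τ : A0.domain →ₗ[ℂ] 𝔥)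
    (T : ℂ → H →L[ℂ] 𝔥)
    (hT : ∀ z, ∀ hz : z ∈ Z, ∀ v : H, T z v = τ ⟨R0 z v, hRdom z hz v⟩)
    (hker : Dense ((fun u : A0.domain => (u : H)) '' {u | τ u = 0}))
    (ZΛ : Set ℂ) (hZΛsub : ZΛ ⊆ Z) (hZΛne : ZΛ.Nonempty)
    (hZΛconj : ∀ z ∈ ZΛ, (starRingEnd ℂ) z ∈ ZΛ)
    (Λ : ℂ → 𝔥 →L[ℂ] 𝔥)
    (hΛadj : ∀ z ∈ ZΛ, adjoint (Λ z) = Λ ((starRingEnd ℂ) z))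
    (hΛres : ∀ z ∈ ZΛ, ∀ w ∈ ZΛ,
      Λ w - Λ z
        = (z - w) • (Λ w
            ∘L adjoint (adjoint (T ((starRingEnd ℂ) ((starRingEnd ℂ) w))))
            ∘L adjoint (T ((starRingEnd ℂ) z)) ∘L Λ z))
    (RΛ : ℂ → H →L[ℂ] H)
    (hRΛ : ∀ z, RΛ z = R0 z + adjoint (T ((starRingEnd ℂ) z)) ∘L Λ z ∘L T z) :
    ∃ AΛ : H →ₗ.[ℂ] H,
      Dense (AΛ.domain : Set H)
      ∧ AΛ.adjoint = AΛ
      ∧ (∀ u : A0.domain, τ u = 0 →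
          ∃ hu : (u : H) ∈ AΛ.domain, AΛ ⟨(u : H), hu⟩ = A0 u)
      ∧ (∀ z, z ∈ ZΛ → ∀ v : H,
          ∃ hv : RΛ z v ∈ AΛ.domain, z • RΛ z v - AΛ ⟨RΛ z v, hv⟩ = v)
      ∧ (∀ z ∈ ZΛ, ∀ u : AΛ.domain, RΛ z (z • (u : H) - AΛ u) = u) := by
  have hA0 : A0.IsFormalAdjoint A0 := by
    simpa only [hA0sa] using A0.adjoint_isFormalAdjoint hA0dense
  have hR0 : ∀ z ∈ ZΛ, A0.IsResolvent z (R0 z) := fun z hz =>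
    ⟨fun v => ⟨_, hRright z (hZΛsub hz) v⟩, hRleft z (hZΛsub hz)⟩
  have hR0adj : ∀ z ∈ ZΛ, adjoint (R0 z) = R0 (conj z) := fun z hz =>
    hA0.adjoint_eq_of_isResolvent (hR0 z hz) (hR0 _ (hZΛconj z hz))
  have hR0res := LinearPMap.isPseudoResolvent_of_isResolvent hR0
  have hTres := hR0res.sub_apply_of_eq_comp (fun z hz => hRdom z (hZΛsub hz)) τ
    (T := fun z => (T z : H →ₗ[ℂ] 𝔥)) fun z hz v _ => hT z (hZΛsub hz) v
  have hΛres_apply : ∀ z ∈ ZΛ, ∀ w ∈ ZΛ, ∀ η, Λ w η - Λ z η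
      = (z - w) • Λ w (T w (adjoint (T (conj z)) (Λ z η))) := fun z hz w hw η => by
    simpa using congr($(hΛres z hz w hw) η)
  have hRΛres : IsPseudoResolvent ZΛ fun z => (RΛ z : H →ₗ[ℂ] H) := by
    rw [funext hRΛ]
    exact hR0res.add_comp_comp hTres (adjoint_sub_apply_of_sub_apply hZΛconj hR0adj hTres)
      (Λ := fun z => (Λ z : 𝔥 →ₗ[ℂ] 𝔥)) hΛres_apply
  have hRΛadj : ∀ z ∈ ZΛ, adjoint (RΛ z) = RΛ (conj z) := fun z hz => by
    simp [hRΛ, adjoint_comp, comp_assoc, hR0adj z hz, hΛadj z hz]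
  have hRΛker : ∀ u : A0.domain, τ u = 0 → ∀ z ∈ ZΛ, RΛ z (z • (u : H) - A0 u) = u := by
    intro u hu z hz
    have hR0u : R0 z (z • (u : H) - A0 u) = u := hRleft z (hZΛsub hz) u
    have hTu : T z (z • (u : H) - A0 u) = 0 := by
      rw [hT z (hZΛsub hz), show (⟨_, _⟩ : A0.domain) = u from Subtype.ext hR0u, hu]
    simp [hRΛ, hR0u, hTu]
  obtain ⟨z₀, hz₀⟩ := hZΛne
  obtain ⟨AΛ, hdense, hsa, hAΛ⟩ := exists_adjoint_eq_self_isResolvent hz₀ hZΛconj hRΛres hRΛadj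
    (hker.mono (by rintro _ ⟨u, hu, rfl⟩; exact ⟨_, hRΛker u hu z₀ hz₀⟩))
  exact ⟨AΛ, hdense, hsa,
    fun u hu => (hAΛ z₀ hz₀).exists_mem_domain_apply_eq u (hRΛker u hu z₀ hz₀),
    fun z hz => (hAΛ z hz).right_inv, fun z hz => (hAΛ z hz).left_inv⟩

open ContinuousLinearMap in
/-- Theorem 2.4 of the paper (Kreĭn-type resolvent formula): assuming `ker τ` dense in `H`,
there exists a densely defined self-adjoint operator `A_Λ` in `H` which extends the
restriction of `A₀` to `ker τ` and whose resolvent at every `z ∈ Z_Λ` is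
`R^Λ_z = R⁰_z + G_z Λ_z (τ R⁰_z)`, where `G_z = (τ R⁰_{z̄})*` and `τ R⁰_z = T z`. -/
theorem statement0
    {H 𝔥 : Type*}
    [NormedAddCommGroup H] [InnerProductSpace ℂ H] [CompleteSpace H]
    [NormedAddCommGroup 𝔥] [InnerProductSpace ℂ 𝔥] [CompleteSpace 𝔥]
    (A0 : H →ₗ.[ℂ] H)
    (hA0dense : Dense (A0.domain : Set H))
    (hA0sa : A0.adjoint = A0)
    (Z : Set ℂ) (hZne : Z.Nonempty) (hZconj : ∀ z ∈ Z, (starRingEnd ℂ) z ∈ Z)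
    (R0 : ℂ → H →L[ℂ] H)
    (hRdom : ∀ z, z ∈ Z → ∀ v : H, R0 z v ∈ A0.domain)
    (hRleft : ∀ z ∈ Z, ∀ u : A0.domain, R0 z (z • (u : H) - A0 u) = u)
    (hRright : ∀ z, ∀ hz : z ∈ Z, ∀ v : H,
      z • R0 z v - A0 ⟨R0 z v, hRdom z hz v⟩ = v)
    (τ : A0.domain →ₗ[ℂ] 𝔥)
    (hτsurj : Function.Surjective τ)
    (hτbdd : ∃ C : ℝ, 0 < C ∧ ∀ u : A0.domain, ‖τ u‖ ≤ C * (‖(u : H)‖ + ‖A0 u‖))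
    (T : ℂ → H →L[ℂ] 𝔥)
    (hT : ∀ z, ∀ hz : z ∈ Z, ∀ v : H, T z v = τ ⟨R0 z v, hRdom z hz v⟩)
    (hker : Dense ((fun u : A0.domain => (u : H)) '' {u | τ u = 0}))
    (ZΛ : Set ℂ) (hZΛsub : ZΛ ⊆ Z) (hZΛne : ZΛ.Nonempty)
    (hZΛconj : ∀ z ∈ ZΛ, (starRingEnd ℂ) z ∈ ZΛ)
    (Λ : ℂ → 𝔥 →L[ℂ] 𝔥)
    (hΛadj : ∀ z ∈ ZΛ, adjoint (Λ z) = Λ ((starRingEnd ℂ) z))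
    (hΛres : ∀ z ∈ ZΛ, ∀ w ∈ ZΛ,
      Λ w - Λ z
        = (z - w) • (Λ w
            ∘L adjoint (adjoint (T ((starRingEnd ℂ) ((starRingEnd ℂ) w))))
            ∘L adjoint (T ((starRingEnd ℂ) z)) ∘L Λ z))
    (RΛ : ℂ → H →L[ℂ] H)
    (hRΛ : ∀ z, RΛ z = R0 z + adjoint (T ((starRingEnd ℂ) z)) ∘L Λ z ∘L T z) :
    ∃ AΛ : H →ₗ.[ℂ] H,
      Dense (AΛ.domain : Set H)
      ∧ AΛ.adjoint = AΛ
      ∧ (∀ u : A0.domain, τ u = 0 →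
          ∃ hu : (u : H) ∈ AΛ.domain, AΛ ⟨(u : H), hu⟩ = A0 u)
      ∧ (∀ z, z ∈ ZΛ → ∀ v : H,
          ∃ hv : RΛ z v ∈ AΛ.domain, z • RΛ z v - AΛ ⟨RΛ z v, hv⟩ = v)
      ∧ (∀ z ∈ ZΛ, ∀ u : AΛ.domain, RΛ z (z • (u : H) - AΛ u) = u) :=
  statement0_general A0 hA0dense hA0sa Z R0 hRdom hRleft hRright τ T hT hker ZΛ hZΛsub hZΛne hZΛconj
    Λ hΛadj hΛres RΛ hRΛ
end

section
/- For all z, w ∈ Z_Λ the operators R^Λ satisfy the resolvent identity R^Λ_z − R^Λ_w = (w − z) R^Λ_w ∘ R^Λ_z, and the adjoint symmetry (R^Λ_z)* = R^Λ_{z̄}. -/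
open ContinuousLinearMap

variable {H 𝔥 : Type*}
  [NormedAddCommGroup H] [InnerProductSpace ℂ H] [CompleteSpace H]
  [NormedAddCommGroup 𝔥] [InnerProductSpace ℂ 𝔥] [CompleteSpace 𝔥]

/-- `G_z := (T_{z̄})*`. -/
noncomputable def G (T : ℂ → H →L[ℂ] 𝔥) (z : ℂ) : 𝔥 →L[ℂ] H :=
  adjoint (T ((starRingEnd ℂ) z))

/-- `R^Λ_z := R_z + G_z ∘ Λ_z ∘ (G_{z̄})*`, where `(G_{z̄})* = T_z`. -/
noncomputable def RLam (R : ℂ → H →L[ℂ] H) (T : ℂ → H →L[ℂ] 𝔥)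
    (Λ : ℂ → 𝔥 →L[ℂ] 𝔥) (z : ℂ) : H →L[ℂ] H :=
  R z + G T z ∘L Λ z ∘L T z

private lemma tele {X Y Z' W : Type*}
    [NormedAddCommGroup X] [NormedSpace ℂ X]
    [NormedAddCommGroup Y] [NormedSpace ℂ Y]
    [NormedAddCommGroup Z'] [NormedSpace ℂ Z']
    [NormedAddCommGroup W] [NormedSpace ℂ W]
    (a a' : Z' →L[ℂ] W) (b b' : Y →L[ℂ] Z') (c c' : X →L[ℂ] Y) :
    a ∘L (b ∘L c) - a' ∘L (b' ∘L c')
      = (a - a') ∘L (b ∘L c) + a' ∘L ((b - b') ∘L c) + a' ∘L (b' ∘L (c - c')) := by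
  simp only [sub_comp, comp_sub]
  abel

/-- First part of the proof of Theorem 2.4 of the paper: the family `R^Λ` is a
pseudo-resolvent with adjoint symmetry: `R^Λ_z − R^Λ_w = (w − z) R^Λ_w ∘ R^Λ_z` and
`(R^Λ_z)* = R^Λ_{z̄}` for all `z, w ∈ Z_Λ`. -/
theorem statement1
    (Z : Set ℂ) (hZne : Z.Nonempty) (hZconj : ∀ z ∈ Z, (starRingEnd ℂ) z ∈ Z)
    (R : ℂ → H →L[ℂ] H)
    (hRres : ∀ z ∈ Z, ∀ w ∈ Z, R z - R w = (w - z) • (R w ∘L R z))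
    (hRadj : ∀ z ∈ Z, adjoint (R z) = R ((starRingEnd ℂ) z))
    (T : ℂ → H →L[ℂ] 𝔥)
    (hT : ∀ z ∈ Z, ∀ w ∈ Z, T z - T w = (w - z) • (T w ∘L R z))
    (ZΛ : Set ℂ) (hZΛsub : ZΛ ⊆ Z) (hZΛne : ZΛ.Nonempty)
    (hZΛconj : ∀ z ∈ ZΛ, (starRingEnd ℂ) z ∈ ZΛ)
    (Λ : ℂ → 𝔥 →L[ℂ] 𝔥)
    (hΛadj : ∀ z ∈ ZΛ, adjoint (Λ z) = Λ ((starRingEnd ℂ) z))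
    (hΛres : ∀ z ∈ ZΛ, ∀ w ∈ ZΛ,
      Λ w - Λ z
        = (z - w) • (Λ w ∘L adjoint (G T ((starRingEnd ℂ) w)) ∘L G T z ∘L Λ z)) :
    ∀ z ∈ ZΛ, ∀ w ∈ ZΛ,
      (RLam R T Λ z - RLam R T Λ w = (w - z) • (RLam R T Λ w ∘L RLam R T Λ z))
        ∧ adjoint (RLam R T Λ z) = RLam R T Λ ((starRingEnd ℂ) z) := by
  have hGadj : ∀ u : ℂ, adjoint (G T u) = T ((starRingEnd ℂ) u) := fun u => by simp [G]
  have hTadj : ∀ u : ℂ, adjoint (T u) = G T ((starRingEnd ℂ) u) := fun u => by simp [G]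
  intro z hz w hw
  have hzZ : z ∈ Z := hZΛsub hz
  have hwZ : w ∈ Z := hZΛsub hw
  have hczZ : (starRingEnd ℂ) z ∈ Z := hZΛsub (hZΛconj z hz)
  have hcwZ : (starRingEnd ℂ) w ∈ Z := hZΛsub (hZΛconj w hw)
  -- G resolvent identity
  have hGres : G T z - G T w = (w - z) • (R w ∘L G T z) := by
    have e := hT _ hcwZ _ hczZ
    have e2 : adjoint (T ((starRingEnd ℂ) w) - T ((starRingEnd ℂ) z))
        = adjoint (((starRingEnd ℂ) z - (starRingEnd ℂ) w) •
            (T ((starRingEnd ℂ) z) ∘L R ((starRingEnd ℂ) w))) := by rw [e]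
    rw [map_sub, LinearIsometryEquiv.map_smulₛₗ, adjoint_comp, hRadj _ hcwZ,
      hTadj] at e2
    simp only [map_sub, RingHom.id_apply, Complex.conj_conj] at e2
    rw [show adjoint (T ((starRingEnd ℂ) z)) = G T z from rfl] at e2
    rw [show (w - z : ℂ) = -(z - w) by ring, neg_smul, ← e2]
    abel
  -- Λ resolvent identity, rewritten
  have hΛres' : Λ z - Λ w = (w - z) • (Λ w ∘L (T w ∘L (G T z ∘L Λ z))) := by
    have e := hΛres z hz w hw
    rw [hGadj, Complex.conj_conj] at e
    rw [show (w - z : ℂ) = -(z - w) by ring, neg_smul, ← e]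
    abel
  constructor
  · simp only [RLam]
    rw [show R z + G T z ∘L (Λ z ∘L T z) - (R w + G T w ∘L (Λ w ∘L T w))
        = (R z - R w) + (G T z ∘L (Λ z ∘L T z) - G T w ∘L (Λ w ∘L T w)) from by abel,
      tele, hGres, hΛres', hT z hzZ w hwZ, hRres z hzZ w hwZ]
    simp only [smul_comp, comp_smul, comp_add, add_comp, smul_add, comp_assoc]
    abel
  · simp only [RLam, map_add, adjoint_comp, hRadj z hzZ, hΛadj z hz, hTadj, hGadj,
      comp_assoc]
end

section
/- If for every z ∈ Z_Λ the operator R_z is injective and ran(G_z) ∩ ran(R_z) = {0}, then for every z ∈ Z_Λ the operator R^Λ_z is injective and has dense range. -/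
open ContinuousLinearMap

variable {H 𝔥 : Type*}
  [NormedAddCommGroup H] [InnerProductSpace ℂ H] [CompleteSpace H]
  [NormedAddCommGroup 𝔥] [InnerProductSpace ℂ 𝔥] [CompleteSpace 𝔥]

/-!
Injectivity: if `R_z x + G_z Λ_z T_z x = 0`, the vector `G_z Λ_z T_z x = R_z (-x)` lies in
`ran G_z ∩ ran R_z = {0}`, so `R_z x = 0` and `x = 0`. Dense range: the adjoint of `R^Λ_z` is
`R^Λ_{z̄}`, which is injective by the same argument, and `(ran A)ᗮ = ker A*`.
-/

namespace ContinuousLinearMap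

theorem injective_add_of_range_inter_subset {R M N : Type*} [Ring R]
    [TopologicalSpace M] [AddCommGroup M] [Module R M]
    [TopologicalSpace N] [AddCommGroup N] [Module R N] [ContinuousAdd N]
    {f g : M →L[R] N} (hf : Function.Injective f) (hfg : Set.range g ∩ Set.range f ⊆ {0}) :
    Function.Injective (f + g) := by
  rw [injective_iff_map_eq_zero]
  intro x hx
  have hgx_mem : g x ∈ Set.range g ∩ Set.range f :=
    ⟨⟨x, rfl⟩, ⟨-x, by rw [map_neg, neg_eq_iff_add_eq_zero]; exact hx⟩⟩
  have hgx : g x = 0 := hfg hgx_mem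
  have hfx : f x = f 0 := by
    rw [map_zero, ← hx, add_apply, hgx, add_zero]
  exact hf hfx

theorem dense_range_of_injective_adjoint {𝕜 E F : Type*} [RCLike 𝕜]
    [NormedAddCommGroup E] [InnerProductSpace 𝕜 E] [CompleteSpace E]
    [NormedAddCommGroup F] [InnerProductSpace 𝕜 F] [CompleteSpace F]
    {A : E →L[𝕜] F} (h : Function.Injective (adjoint A)) : Dense (Set.range A) := by
  rw [← coe_coe, ← LinearMap.coe_range, Submodule.dense_iff_topologicalClosure_eq_top,
    Submodule.topologicalClosure_eq_top_iff]
  exact (orthogonal_range A).trans (LinearMap.ker_eq_bot.mpr h)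

end ContinuousLinearMap

theorem injective_RLam {R : ℂ → H →L[ℂ] H} {T : ℂ → H →L[ℂ] 𝔥} {Λ : ℂ → 𝔥 →L[ℂ] 𝔥} {z : ℂ}
    (hRinj : Function.Injective (R z)) (hdisj : Set.range (G T z) ∩ Set.range (R z) = {0}) :
    Function.Injective (RLam R T Λ z) :=
  injective_add_of_range_inter_subset hRinj <| hdisj ▸
    Set.inter_subset_inter_left _ fun _ ⟨x, hx⟩ => ⟨Λ z (T z x), hx⟩

theorem adjoint_RLam {R : ℂ → H →L[ℂ] H} {T : ℂ → H →L[ℂ] 𝔥} {Λ : ℂ → 𝔥 →L[ℂ] 𝔥} {z : ℂ}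
    (hRadj : adjoint (R z) = R ((starRingEnd ℂ) z))
    (hΛadj : adjoint (Λ z) = Λ ((starRingEnd ℂ) z)) :
    adjoint (RLam R T Λ z) = RLam R T Λ ((starRingEnd ℂ) z) := by
  have hGadj : adjoint (G T z) = T ((starRingEnd ℂ) z) := by simp [G]
  have hTadj : adjoint (T z) = G T ((starRingEnd ℂ) z) := by simp [G]
  rw [RLam, map_add, adjoint_comp, adjoint_comp, hRadj, hGadj, hTadj, hΛadj, RLam, comp_assoc]

theorem statement2_general
    (Z : Set ℂ)
    (R : ℂ → H →L[ℂ] H)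
    (hRadj : ∀ z ∈ Z, adjoint (R z) = R ((starRingEnd ℂ) z))
    (T : ℂ → H →L[ℂ] 𝔥)
    (ZΛ : Set ℂ) (hZΛsub : ZΛ ⊆ Z)
    (hZΛconj : ∀ z ∈ ZΛ, (starRingEnd ℂ) z ∈ ZΛ)
    (Λ : ℂ → 𝔥 →L[ℂ] 𝔥)
    (hΛadj : ∀ z ∈ ZΛ, adjoint (Λ z) = Λ ((starRingEnd ℂ) z))
    (hRinj : ∀ z ∈ ZΛ, Function.Injective (R z))
    (hdisj : ∀ z ∈ ZΛ, Set.range (G T z) ∩ Set.range (R z) = {0}) :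
    ∀ z ∈ ZΛ,
      Function.Injective (RLam R T Λ z) ∧ Dense (Set.range (RLam R T Λ z)) := by
  intro z hz
  have hinj : ∀ w ∈ ZΛ, Function.Injective (RLam R T Λ w) := fun w hw =>
    injective_RLam (hRinj w hw) (hdisj w hw)
  refine ⟨hinj z hz, dense_range_of_injective_adjoint ?_⟩
  rw [adjoint_RLam (hRadj z (hZΛsub hz)) (hΛadj z hz)]
  exact hinj _ (hZΛconj z hz)

/-- Injectivity/dense-range step in the proof of Theorem 2.4 of the paper: if each `R_z`
is injective and `ran(G_z) ∩ ran(R_z) = {0}` for `z ∈ Z_Λ`, then each `R^Λ_z` is injective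
with dense range. -/
theorem statement2
    (Z : Set ℂ) (hZne : Z.Nonempty) (hZconj : ∀ z ∈ Z, (starRingEnd ℂ) z ∈ Z)
    (R : ℂ → H →L[ℂ] H)
    (hRres : ∀ z ∈ Z, ∀ w ∈ Z, R z - R w = (w - z) • (R w ∘L R z))
    (hRadj : ∀ z ∈ Z, adjoint (R z) = R ((starRingEnd ℂ) z))
    (T : ℂ → H →L[ℂ] 𝔥)
    (hT : ∀ z ∈ Z, ∀ w ∈ Z, T z - T w = (w - z) • (T w ∘L R z))
    (ZΛ : Set ℂ) (hZΛsub : ZΛ ⊆ Z) (hZΛne : ZΛ.Nonempty)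
    (hZΛconj : ∀ z ∈ ZΛ, (starRingEnd ℂ) z ∈ ZΛ)
    (Λ : ℂ → 𝔥 →L[ℂ] 𝔥)
    (hΛadj : ∀ z ∈ ZΛ, adjoint (Λ z) = Λ ((starRingEnd ℂ) z))
    (hΛres : ∀ z ∈ ZΛ, ∀ w ∈ ZΛ,
      Λ w - Λ z
        = (z - w) • (Λ w ∘L adjoint (G T ((starRingEnd ℂ) w)) ∘L G T z ∘L Λ z))
    (hRinj : ∀ z ∈ ZΛ, Function.Injective (R z))
    (hdisj : ∀ z ∈ ZΛ, Set.range (G T z) ∩ Set.range (R z) = {0}) :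
    ∀ z ∈ ZΛ,
      Function.Injective (RLam R T Λ z) ∧ Dense (Set.range (RLam R T Λ z)) :=
  statement2_general Z R hRadj T ZΛ hZΛsub hZΛconj Λ hΛadj hRinj hdisj
end

section
/- Assume ker(τ) is dense in H. Then for every z ∈ Z_Λ one has ran(R^Λ_z) ∩ dom(A₀) = { u ∈ dom(A₀) : Λ_z(τu) = 0 }. (Since ran(R^Λ_z) is the domain of the self-adjoint operator A_Λ associated with the family Λ, this says dom(A₀) ∩ dom(A_Λ) = {u ∈ dom(A₀) : Λ_z τu = 0}.) -/
/-!
Write `G := (T_{z̄})†`, so that `R^Λ_z = R⁰_z + G Λ_z T_z`. The key fact is that `G` meets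
`dom A₀` only in `0`: if `x = G φ ∈ dom A₀`, then for every `u ∈ ker τ`,
`⟪z x - A₀ x, u⟫ = ⟪x, z̄ u - A₀ u⟫ = ⟪φ, τ u⟫ = 0` by symmetry of `A₀`, so density of `ker τ`
gives `(z - A₀) x = 0`, whence `x = 0`. Moreover `G` is injective because `T_{z̄}` is onto `𝔥`
(as `τ` is). Hence an element `R⁰_z v + G Λ_z T_z v` of `dom A₀` equals `R⁰_z v` and satisfies
`Λ_z τ(R⁰_z v) = Λ_z T_z v = 0`; conversely `u ∈ dom A₀` with `Λ_z τ u = 0` is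
`R^Λ_z ((z - A₀) u)`.
-/

section

open scoped InnerProduct

variable {H 𝔥 : Type*}
  [NormedAddCommGroup H] [InnerProductSpace ℂ H] [NormedAddCommGroup 𝔥] [InnerProductSpace ℂ 𝔥]

theorem ContinuousLinearMap.adjoint_injective_of_surjective [CompleteSpace H] [CompleteSpace 𝔥]
    {S : H →L[ℂ] 𝔥} (hS : Function.Surjective S) : Function.Injective (S†) :=
  (injective_iff_map_eq_zero _).2 fun φ hφ =>
    hS.denseRange.eq_zero_of_inner_left ℂ fun v => by
      rw [← adjoint_inner_left, hφ, inner_zero_left]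

namespace LinearPMap

variable {A : H →ₗ.[ℂ] H} {z : ℂ} {R : H →L[ℂ] H} {τ : A.domain →ₗ[ℂ] 𝔥} {T : H →L[ℂ] 𝔥}

theorem eq_zero_of_smul_sub_eq_zero (hR : ∀ u : A.domain, R (z • (u : H) - A u) = u)
    {u : A.domain} (hu : z • (u : H) - A u = 0) : (u : H) = 0 := by
  rw [← hR u, hu, _root_.map_zero]

theorem apply_smul_sub_eq_trace (hRdom : ∀ v, R v ∈ A.domain)
    (hR : ∀ u : A.domain, R (z • (u : H) - A u) = u) (hT : ∀ v, T v = τ ⟨R v, hRdom v⟩)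
    (u : A.domain) : T (z • (u : H) - A u) = τ u := by
  rw [hT]
  exact congrArg τ (Subtype.ext (hR u))

theorem surjective_of_apply_smul_sub_eq_trace (hτ : Function.Surjective τ)
    (hT : ∀ u : A.domain, T (z • (u : H) - A u) = τ u) : Function.Surjective T := by
  intro φ
  obtain ⟨u, rfl⟩ := hτ φ
  exact ⟨_, hT u⟩

theorem adjoint_apply_eq_zero_of_mem_domain [CompleteSpace H] [CompleteSpace 𝔥]
    (hA : A.IsFormalAdjoint A) (hR : ∀ u : A.domain, R (z • (u : H) - A u) = u)
    (hker : Dense ((fun u : A.domain => (u : H)) '' {u | τ u = 0}))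
    (hT : ∀ u : A.domain, T ((starRingEnd ℂ) z • (u : H) - A u) = τ u)
    {φ : 𝔥} (hφ : (T†) φ ∈ A.domain) : (T†) φ = 0 := by
  set x : A.domain := ⟨(T†) φ, hφ⟩
  have hx : z • (x : H) - A x = 0 := by
    refine hker.eq_zero_of_inner_left ℂ ?_
    rintro _ ⟨u, hu, rfl⟩
    calc inner ℂ (z • (x : H) - A x) (u : H)
        = inner ℂ (x : H) ((starRingEnd ℂ) z • (u : H) - A u) := by
          rw [inner_sub_left, inner_sub_right, inner_smul_left, inner_smul_right, hA x u]
      _ = 0 := by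
          rw [ContinuousLinearMap.adjoint_inner_left, hT, Set.mem_ofPred_eq.mp hu, inner_zero_right]
  exact eq_zero_of_smul_sub_eq_zero hR hx

theorem range_add_adjoint_comp_inter_domain [CompleteSpace H] [CompleteSpace 𝔥]
    (hA : A.IsFormalAdjoint A) (hRdom : ∀ v, R v ∈ A.domain)
    (hR : ∀ u : A.domain, R (z • (u : H) - A u) = u)
    (hτ : Function.Surjective τ)
    (hker : Dense ((fun u : A.domain => (u : H)) '' {u | τ u = 0}))
    (hT : ∀ v, T v = τ ⟨R v, hRdom v⟩) {S : H →L[ℂ] 𝔥}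
    (hS : ∀ u : A.domain, S ((starRingEnd ℂ) z • (u : H) - A u) = τ u) (L : 𝔥 →L[ℂ] 𝔥) :
    Set.range (R + (S†) ∘L L ∘L T) ∩ (A.domain : Set H)
      = {x : H | ∃ hx : x ∈ A.domain, L (τ ⟨x, hx⟩) = 0} := by
  ext x
  simp only [Set.mem_inter_iff, Set.mem_range, SetLike.mem_coe, Set.mem_ofPred_eq,
    _root_.add_apply, ContinuousLinearMap.comp_apply]
  constructor
  · rintro ⟨⟨v, rfl⟩, hx⟩
    have hmem : (S†) (L (T v)) ∈ A.domain := by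
      simpa using A.domain.sub_mem hx (hRdom v)
    have hG : (S†) (L (T v)) = 0 := adjoint_apply_eq_zero_of_mem_domain hA hR hker hS hmem
    have hS_surj : Function.Surjective S := surjective_of_apply_smul_sub_eq_trace hτ hS
    have hL : L (T v) = 0 := (injective_iff_map_eq_zero _).1
      (ContinuousLinearMap.adjoint_injective_of_surjective hS_surj) _ hG
    simp only [hG, add_zero]
    exact ⟨hRdom v, by rw [← hT, hL]⟩
  · rintro ⟨hx, hL⟩
    refine ⟨⟨z • x - A ⟨x, hx⟩, ?_⟩, hx⟩
    rw [apply_smul_sub_eq_trace hRdom hR hT ⟨x, hx⟩, hL, _root_.map_zero, add_zero]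
    exact hR ⟨x, hx⟩

end LinearPMap

end

open ContinuousLinearMap in
theorem statement3_general
    {H 𝔥 : Type*}
    [NormedAddCommGroup H] [InnerProductSpace ℂ H] [CompleteSpace H]
    [NormedAddCommGroup 𝔥] [InnerProductSpace ℂ 𝔥] [CompleteSpace 𝔥]
    (A0 : H →ₗ.[ℂ] H)
    (hA0dense : Dense (A0.domain : Set H))
    (hA0sa : A0.adjoint = A0)
    (Z : Set ℂ) (hZconj : ∀ z ∈ Z, (starRingEnd ℂ) z ∈ Z)
    (R0 : ℂ → H →L[ℂ] H)
    (hRdom : ∀ z, z ∈ Z → ∀ v : H, R0 z v ∈ A0.domain)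
    (hRleft : ∀ z ∈ Z, ∀ u : A0.domain, R0 z (z • (u : H) - A0 u) = u)
    (τ : A0.domain →ₗ[ℂ] 𝔥)
    (hτsurj : Function.Surjective τ)
    (T : ℂ → H →L[ℂ] 𝔥)
    (hT : ∀ z, ∀ hz : z ∈ Z, ∀ v : H, T z v = τ ⟨R0 z v, hRdom z hz v⟩)
    (hker : Dense ((fun u : A0.domain => (u : H)) '' {u | τ u = 0}))
    (ZΛ : Set ℂ) (hZΛsub : ZΛ ⊆ Z)
    (Λ : ℂ → 𝔥 →L[ℂ] 𝔥)
    (RΛ : ℂ → H →L[ℂ] H)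
    (hRΛ : ∀ z, RΛ z = R0 z + adjoint (T ((starRingEnd ℂ) z)) ∘L Λ z ∘L T z) :
    ∀ z ∈ ZΛ,
      Set.range (RΛ z) ∩ (A0.domain : Set H)
        = {x : H | ∃ hx : x ∈ A0.domain, Λ z (τ ⟨x, hx⟩) = 0} := by
  intro z hz
  have hzZ : z ∈ Z := hZΛsub hz
  have hzbZ : (starRingEnd ℂ) z ∈ Z := hZconj z hzZ
  have hA0sym : A0.IsFormalAdjoint A0 := by
    simpa only [hA0sa] using LinearPMap.adjoint_isFormalAdjoint hA0dense
  have hTconj : ∀ u : A0.domain,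
      T ((starRingEnd ℂ) z) ((starRingEnd ℂ) z • (u : H) - A0 u) = τ u :=
    LinearPMap.apply_smul_sub_eq_trace (hRdom _ hzbZ) (hRleft _ hzbZ) (hT _ hzbZ)
  rw [hRΛ]
  exact LinearPMap.range_add_adjoint_comp_inter_domain hA0sym (hRdom z hzZ) (hRleft z hzZ)
    hτsurj hker (hT z hzZ) hTconj (Λ z)

open ContinuousLinearMap in
/-- Equation (2.11) in the proof of Theorem 2.4 of the paper: assuming `ker τ` dense in `H`,
for every `z ∈ Z_Λ` one has
`ran(R^Λ_z) ∩ dom(A₀) = {u ∈ dom(A₀) : Λ_z (τ u) = 0}`,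
where `R^Λ_z = R⁰_z + G_z Λ_z (τ R⁰_z)`, `G_z = (τ R⁰_{z̄})*` and `τ R⁰_z = T z`. -/
theorem statement3
    {H 𝔥 : Type*}
    [NormedAddCommGroup H] [InnerProductSpace ℂ H] [CompleteSpace H]
    [NormedAddCommGroup 𝔥] [InnerProductSpace ℂ 𝔥] [CompleteSpace 𝔥]
    (A0 : H →ₗ.[ℂ] H)
    (hA0dense : Dense (A0.domain : Set H))
    (hA0sa : A0.adjoint = A0)
    (Z : Set ℂ) (hZne : Z.Nonempty) (hZconj : ∀ z ∈ Z, (starRingEnd ℂ) z ∈ Z)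
    (R0 : ℂ → H →L[ℂ] H)
    (hRdom : ∀ z, z ∈ Z → ∀ v : H, R0 z v ∈ A0.domain)
    (hRleft : ∀ z ∈ Z, ∀ u : A0.domain, R0 z (z • (u : H) - A0 u) = u)
    (hRright : ∀ z, ∀ hz : z ∈ Z, ∀ v : H,
      z • R0 z v - A0 ⟨R0 z v, hRdom z hz v⟩ = v)
    (τ : A0.domain →ₗ[ℂ] 𝔥)
    (hτsurj : Function.Surjective τ)
    (hτbdd : ∃ C : ℝ, 0 < C ∧ ∀ u : A0.domain, ‖τ u‖ ≤ C * (‖(u : H)‖ + ‖A0 u‖))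
    (T : ℂ → H →L[ℂ] 𝔥)
    (hT : ∀ z, ∀ hz : z ∈ Z, ∀ v : H, T z v = τ ⟨R0 z v, hRdom z hz v⟩)
    (hker : Dense ((fun u : A0.domain => (u : H)) '' {u | τ u = 0}))
    (ZΛ : Set ℂ) (hZΛsub : ZΛ ⊆ Z) (hZΛne : ZΛ.Nonempty)
    (hZΛconj : ∀ z ∈ ZΛ, (starRingEnd ℂ) z ∈ ZΛ)
    (Λ : ℂ → 𝔥 →L[ℂ] 𝔥)
    (hΛadj : ∀ z ∈ ZΛ, adjoint (Λ z) = Λ ((starRingEnd ℂ) z))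
    (hΛres : ∀ z ∈ ZΛ, ∀ w ∈ ZΛ,
      Λ w - Λ z
        = (z - w) • (Λ w
            ∘L adjoint (adjoint (T ((starRingEnd ℂ) ((starRingEnd ℂ) w))))
            ∘L adjoint (T ((starRingEnd ℂ) z)) ∘L Λ z))
    (RΛ : ℂ → H →L[ℂ] H)
    (hRΛ : ∀ z, RΛ z = R0 z + adjoint (T ((starRingEnd ℂ) z)) ∘L Λ z ∘L T z) :
    ∀ z ∈ ZΛ,
      Set.range (RΛ z) ∩ (A0.domain : Set H)
        = {x : H | ∃ hx : x ∈ A0.domain, Λ z (τ ⟨x, hx⟩) = 0} :=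
  statement3_general A0 hA0dense hA0sa Z hZconj R0 hRdom hRleft τ hτsurj T hT hker ZΛ hZΛsub Λ RΛ
    hRΛ
end

section
/- For all z, w ∈ Z one has (G_z)* ∘ G_w = (G_{w̄})* ∘ G_{z̄}; equivalently, T_{z̄} ∘ G_w = T_w ∘ G_{z̄}. -/
open ContinuousLinearMap

variable {H 𝔥 : Type*}
  [NormedAddCommGroup H] [InnerProductSpace ℂ H] [CompleteSpace H]
  [NormedAddCommGroup 𝔥] [InnerProductSpace ℂ 𝔥] [CompleteSpace 𝔥]

/-- Equation (2.5) of the paper: `G_z* ∘ G_w = G_{w̄}* ∘ G_{z̄}`, equivalently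
`T_{z̄} ∘ G_w = T_w ∘ G_{z̄}`, where `G_z := (T_{z̄})*`. -/
theorem statement5
    (Z : Set ℂ) (hZne : Z.Nonempty) (hZconj : ∀ z ∈ Z, (starRingEnd ℂ) z ∈ Z)
    (R : ℂ → H →L[ℂ] H)
    (hRres : ∀ z ∈ Z, ∀ w ∈ Z, R z - R w = (w - z) • (R w ∘L R z))
    (hRadj : ∀ z ∈ Z, adjoint (R z) = R ((starRingEnd ℂ) z))
    (T : ℂ → H →L[ℂ] 𝔥)
    (hT : ∀ z ∈ Z, ∀ w ∈ Z, T z - T w = (w - z) • (T w ∘L R z)) :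
    ∀ z ∈ Z, ∀ w ∈ Z,
      (adjoint (G T z) ∘L G T w
          = adjoint (G T ((starRingEnd ℂ) w)) ∘L G T ((starRingEnd ℂ) z))
        ∧ (T ((starRingEnd ℂ) z) ∘L G T w
          = T w ∘L G T ((starRingEnd ℂ) z)) := by
  intro z hz w hw
  have hz' : (starRingEnd ℂ) z ∈ Z := hZconj z hz
  have hw' : (starRingEnd ℂ) w ∈ Z := hZconj w hw
  set zc := (starRingEnd ℂ) z with hzc
  set wc := (starRingEnd ℂ) w with hwc
  -- key swap lemma
  have key : T zc ∘L R w = T w ∘L R zc := by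
    by_cases hzw : zc = w
    · rw [hzw]
    · have h1 := hT zc hz' w hw
      have h2 := hT w hw zc hz'
      have h3 : (zc - w) • (T zc ∘L R w) = (zc - w) • (T w ∘L R zc) := by
        have : T w - T zc = -(T zc - T w) := by abel
        rw [h2, h1] at this
        rw [this, ← neg_smul]; ring_nf
      exact smul_right_injective _ (sub_ne_zero.mpr hzw) h3
  -- express T zc in terms of T w
  have h1 : T zc = T w + (w - zc) • (T w ∘L R zc) := by
    have := hT zc hz' w hw; linear_combination (norm := abel) this
  -- adjoint of T wc in terms of adjoint of T z
  have h2 : adjoint (T wc) = adjoint (T z) + (zc - w) • (R w ∘L adjoint (T z)) := by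
    have h := hT wc hw' z hz
    have h' : T wc = T z + (z - wc) • (T z ∘L R wc) := by
      linear_combination (norm := abel) h
    have := congrArg (fun A => ContinuousLinearMap.adjoint A) h'
    simp only [map_add, adjoint_comp] at this
    rw [this]
    congr 1
    have hsm : adjoint ((z - wc) • (T z ∘L R wc))
        = (starRingEnd ℂ) (z - wc) • adjoint (T z ∘L R wc) :=
      map_smulₛₗ (adjoint : (H →L[ℂ] 𝔥) ≃ₗᵢ⋆[ℂ] _) _ _
    rw [hsm, adjoint_comp, hRadj wc hw']
    simp [hwc, hzc, map_sub]
  have main : T zc ∘L adjoint (T wc) = T w ∘L adjoint (T z) := by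
    rw [h2, comp_add, comp_smul]
    nth_rewrite 1 [h1]
    rw [add_comp, smul_comp]
    have e1 : T zc ∘L (R w ∘L adjoint (T z)) = (T w ∘L R zc) ∘L adjoint (T z) := by
      rw [← comp_assoc, key]
    rw [e1]
    have : (w - zc) = -(zc - w) := by ring
    rw [this, neg_smul]
    abel
  have hG1 : G T w = adjoint (T wc) := rfl
  have hG2 : G T zc = adjoint (T z) := by
    simp [G, hzc, Complex.conj_conj]
  have hG3 : adjoint (G T z) = T zc := by
    simp [G, hzc, adjoint_adjoint]
  have hG4 : adjoint (G T wc) = T w := by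
    simp [G, hwc, Complex.conj_conj, adjoint_adjoint]
  constructor
  · rw [hG3, hG4, hG1, hG2]; exact main
  · rw [hG1, hG2]; exact main
end

section
/- If ker(τ) is dense in H, then for every z ∈ Z one has ran(G_z) ∩ dom(A₀) = {0}. -/
open scoped ComplexInnerProductSpace


/-- Equation (2.2) of the paper: if `ker τ` is dense in `H`, then for every `z` in the
resolvent-type set `Z` one has `ran(G_z) ∩ dom(A₀) = {0}`, where `G_z := (τ ∘ R⁰_{z̄})*`.
Here `A₀` is a densely defined self-adjoint operator in `H`, `R⁰_z` its resolvent at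
`z ∈ Z`, and `τ : dom(A₀) → 𝔥` is surjective and bounded w.r.t. the graph norm. -/
theorem statement6
    {H 𝔥 : Type*}
    [NormedAddCommGroup H] [InnerProductSpace ℂ H] [CompleteSpace H]
    [NormedAddCommGroup 𝔥] [InnerProductSpace ℂ 𝔥] [CompleteSpace 𝔥]
    (A0 : H →ₗ.[ℂ] H)
    (hA0dense : Dense (A0.domain : Set H))
    (hA0sa : A0.adjoint = A0)
    (Z : Set ℂ) (hZne : Z.Nonempty) (hZconj : ∀ z ∈ Z, (starRingEnd ℂ) z ∈ Z)
    (R0 : ℂ → H →L[ℂ] H)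
    (hRdom : ∀ z, z ∈ Z → ∀ v : H, R0 z v ∈ A0.domain)
    (hRleft : ∀ z ∈ Z, ∀ u : A0.domain, R0 z (z • (u : H) - A0 u) = u)
    (hRright : ∀ z, ∀ hz : z ∈ Z, ∀ v : H,
      z • R0 z v - A0 ⟨R0 z v, hRdom z hz v⟩ = v)
    (τ : A0.domain →ₗ[ℂ] 𝔥)
    (hτsurj : Function.Surjective τ)
    (hτbdd : ∃ C : ℝ, 0 < C ∧ ∀ u : A0.domain, ‖τ u‖ ≤ C * (‖(u : H)‖ + ‖A0 u‖))
    (T : ℂ → H →L[ℂ] 𝔥)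
    (hT : ∀ z, ∀ hz : z ∈ Z, ∀ v : H, T z v = τ ⟨R0 z v, hRdom z hz v⟩)
    (hker : Dense ((fun u : A0.domain => (u : H)) '' {u | τ u = 0})) :
    ∀ z ∈ Z,
      Set.range (ContinuousLinearMap.adjoint (T ((starRingEnd ℂ) z)))
        ∩ (A0.domain : Set H) = {0} := by

  intro z hz
  have hzbar := hZconj z hz
  have hadj : ∀ (x u : A0.domain), ⟪(A0 x : H), (u : H)⟫ = ⟪(x : H), A0 u⟫ := by
    intro x u
    have h := A0.adjoint_isFormalAdjoint hA0dense
    -- h : A0.adjoint.IsFormalAdjoint A0 : ∀ x : adjoint.domain, y : A0.domain, ⟪adj x, y⟫ = ⟪x, A0 y⟫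
    have hx : (x : H) ∈ A0.adjoint.domain := by rw [hA0sa]; exact x.2
    have := h ⟨(x : H), hx⟩ u
    have hgen : ∀ (B : H →ₗ.[ℂ] H) (hB : B = A0) (hxB : (x : H) ∈ B.domain),
        B ⟨(x : H), hxB⟩ = A0 x := by
      rintro B rfl hxB
      exact congrArg B (Subtype.ext rfl)
    have heq : A0.adjoint ⟨(x : H), hx⟩ = A0 x := hgen A0.adjoint hA0sa hx
    rw [heq] at this
    exact this
  ext x
  simp only [Set.mem_inter_iff, Set.mem_singleton_iff, Set.mem_range, SetLike.mem_coe]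
  constructor
  · rintro ⟨⟨f, rfl⟩, hxdom⟩
    set x := ContinuousLinearMap.adjoint (T ((starRingEnd ℂ) z)) f with hxdef
    set y : H := z • x - A0 ⟨x, hxdom⟩ with hy
    have key : ∀ u : A0.domain, τ u = 0 → ⟪y, (u : H)⟫ = 0 := by
      intro u hu
      have h1 : ⟪x, (starRingEnd ℂ) z • (u : H) - A0 u⟫
          = ⟪f, T ((starRingEnd ℂ) z) ((starRingEnd ℂ) z • (u : H) - A0 u)⟫ :=
        ContinuousLinearMap.adjoint_inner_left _ _ _
      have h2 : T ((starRingEnd ℂ) z) ((starRingEnd ℂ) z • (u : H) - A0 u) = τ u := by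
        rw [hT _ hzbar]
        congr 1
        exact Subtype.ext (hRleft _ hzbar u)
      rw [h2, hu, inner_zero_right] at h1
      have h3 : ⟪x, (starRingEnd ℂ) z • (u : H) - A0 u⟫
          = ⟪y, (u : H)⟫ := by
        rw [hy, inner_sub_right, inner_sub_left, inner_smul_right, inner_smul_left,
          hadj ⟨x, hxdom⟩ u]
      rw [h3] at h1
      exact h1
    have hy0 : y = 0 := by
      have hc : Continuous (fun v : H => ⟪y, v⟫) := continuous_const.inner continuous_id
      have heq : (fun v : H => ⟪y, v⟫) = (fun _ : H => (0 : ℂ)) := by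
        refine Continuous.ext_on hker hc continuous_const ?_
        rintro v ⟨u, hu, rfl⟩
        exact key u hu
      have := congrFun heq y
      simpa [inner_self_eq_zero] using this
    calc x = R0 z (z • x - A0 ⟨x, hxdom⟩) := (hRleft z hz ⟨x, hxdom⟩).symm
      _ = R0 z y := rfl
      _ = 0 := by rw [hy0, map_zero]
  · rintro rfl
    exact ⟨⟨0, map_zero _⟩, A0.domain.zero_mem⟩
end

section
/- For all μ₁, μ₂ ∈ Z and every λ ∈ ℂ one has (μ₁ − λ)·G_{μ₁} − (μ₂ − λ)·G_{μ₂} = (μ₁ − μ₂)·( 1_H + (λ − μ₂)·R_{μ₂} ) ∘ G_{μ₁}. -/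
open ContinuousLinearMap

variable {H 𝔥 : Type*}
  [NormedAddCommGroup H] [InnerProductSpace ℂ H] [CompleteSpace H]
  [NormedAddCommGroup 𝔥] [InnerProductSpace ℂ 𝔥] [CompleteSpace 𝔥]

/-- The μ-independence identity from the proof of Corollary 4.3 of the paper:
`(μ₁ − λ) G_{μ₁} − (μ₂ − λ) G_{μ₂} = (μ₁ − μ₂)(1 + (λ − μ₂) R_{μ₂}) ∘ G_{μ₁}`. -/
theorem statement11
    (Z : Set ℂ) (hZne : Z.Nonempty) (hZconj : ∀ z ∈ Z, (starRingEnd ℂ) z ∈ Z)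
    (R : ℂ → H →L[ℂ] H)
    (hRres : ∀ z ∈ Z, ∀ w ∈ Z, R z - R w = (w - z) • (R w ∘L R z))
    (hRadj : ∀ z ∈ Z, adjoint (R z) = R ((starRingEnd ℂ) z))
    (T : ℂ → H →L[ℂ] 𝔥)
    (hT : ∀ z ∈ Z, ∀ w ∈ Z, T z - T w = (w - z) • (T w ∘L R z)) :
    ∀ μ₁ ∈ Z, ∀ μ₂ ∈ Z, ∀ lam : ℂ,
      (μ₁ - lam) • G T μ₁ - (μ₂ - lam) • G T μ₂
        = (μ₁ - μ₂) • (((1 : H →L[ℂ] H) + (lam - μ₂) • R μ₂) ∘L G T μ₁) := by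
  intro μ₁ hμ₁ μ₂ hμ₂ lam
  have h1 := hT _ (hZconj μ₂ hμ₂) _ (hZconj μ₁ hμ₁)
  have key : G T μ₂ - G T μ₁ = (μ₁ - μ₂) • (R μ₂ ∘L G T μ₁) := by
    have h2 := congrArg (adjoint : (H →L[ℂ] 𝔥) → (𝔥 →L[ℂ] H)) h1
    simpa [G, map_sub, map_smulₛₗ, adjoint_comp, hRadj _ (hZconj μ₂ hμ₂),
      Complex.conj_conj] using h2
  have hG2 : G T μ₂ = G T μ₁ + (μ₁ - μ₂) • (R μ₂ ∘L G T μ₁) := by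
    linear_combination (norm := abel) key
  rw [hG2]
  simp only [add_comp, smul_comp, one_def, id_comp]
  module
end

section
/- Let W be a complex Hilbert space, j ∈ B(W, H), and let μ ∈ Z with μ real admit a factorization G_μ = j ∘ Ĝ_μ for some Ĝ_μ ∈ B(𝔥, W). Then for every λ ∈ ℝ and ε > 0 such that λ + iε ∈ Z and λ − iε ∈ Z, one has ε·‖G_{λ+iε}‖²_{B(𝔥,H)} ≤ (1/2)·(|μ − λ| + ε)·‖Ĝ_μ‖_{B(𝔥,W)}·( ‖T_{λ+iε} ∘ j‖_{B(W,𝔥)} + ‖T_{λ−iε} ∘ j‖_{B(W,𝔥)} ), and the same bound holds for ε·‖G_{λ−iε}‖²_{B(𝔥,H)}. -/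
open ContinuousLinearMap

variable {H 𝔥 W : Type*}
  [NormedAddCommGroup H] [InnerProductSpace ℂ H] [CompleteSpace H]
  [NormedAddCommGroup 𝔥] [InnerProductSpace ℂ 𝔥] [CompleteSpace 𝔥]
  [NormedAddCommGroup W] [InnerProductSpace ℂ W] [CompleteSpace W]

/-!
Write `z̄` for the conjugate of `z`. Taking adjoints in the compatibility relation gives
`G_z = G_w + (w - z) R_z G_w`, and the compatibility relation between `z` and `z̄` turns
`(z̄ - z) T_{z̄} R_z` into `T_z - T_{z̄}`. Hence
`(z̄ - z) G_z* G_z = (z̄ - w) T_{z̄} G_w + (w - z) T_z G_w`,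
and the C*-identity `‖G_z* G_z‖ = ‖G_z‖²` bounds `2 |Im z| ‖G_z‖²` by the right-hand side.
For real `w = μ` the two coefficients have the same modulus `|μ - z| ≤ |μ - λ| + ε`.
-/

lemma adjoint_G (T : ℂ → H →L[ℂ] 𝔥) (z : ℂ) :
    adjoint (G T z) = T ((starRingEnd ℂ) z) :=
  adjoint_adjoint _

lemma G_sub_G (Z : Set ℂ) (R : ℂ → H →L[ℂ] H)
    (hRadj : ∀ z ∈ Z, adjoint (R z) = R ((starRingEnd ℂ) z))
    (T : ℂ → H →L[ℂ] 𝔥) (hT : ∀ z ∈ Z, ∀ w ∈ Z, T z - T w = (w - z) • (T w ∘L R z))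
    {z w : ℂ} (hz : (starRingEnd ℂ) z ∈ Z) (hw : (starRingEnd ℂ) w ∈ Z) :
    G T z - G T w = (w - z) • (R z ∘L G T w) := by
  have h := congrArg adjoint (hT _ hz _ hw)
  rwa [map_sub, map_smulₛₗ, adjoint_comp, hRadj _ hz, map_sub, Complex.conj_conj,
    Complex.conj_conj] at h

lemma smul_adjoint_G_comp_G (Z : Set ℂ) (R : ℂ → H →L[ℂ] H)
    (hRadj : ∀ z ∈ Z, adjoint (R z) = R ((starRingEnd ℂ) z))
    (T : ℂ → H →L[ℂ] 𝔥) (hT : ∀ z ∈ Z, ∀ w ∈ Z, T z - T w = (w - z) • (T w ∘L R z))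
    {z w : ℂ} (hz : z ∈ Z) (hz' : (starRingEnd ℂ) z ∈ Z) (hw : (starRingEnd ℂ) w ∈ Z) :
    ((starRingEnd ℂ) z - z) • (adjoint (G T z) ∘L G T z)
      = ((starRingEnd ℂ) z - w) • (T ((starRingEnd ℂ) z) ∘L G T w)
        + (w - z) • (T z ∘L G T w) := by
  have hG : G T z = G T w + (w - z) • (R z ∘L G T w) :=
    sub_eq_iff_eq_add'.mp (G_sub_G Z R hRadj T hT hz' hw)
  have hTR : ((starRingEnd ℂ) z - z) • (T ((starRingEnd ℂ) z) ∘L R z ∘L G T w)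
      = T z ∘L G T w - T ((starRingEnd ℂ) z) ∘L G T w := by
    rw [← comp_assoc, ← smul_comp, ← sub_comp, ← hT _ hz _ hz']
  rw [adjoint_G, hG, comp_add, comp_smul]
  linear_combination (norm := module) (w - z) • hTR

lemma two_mul_abs_im_mul_norm_G_sq_le (Z : Set ℂ) (R : ℂ → H →L[ℂ] H)
    (hRadj : ∀ z ∈ Z, adjoint (R z) = R ((starRingEnd ℂ) z))
    (T : ℂ → H →L[ℂ] 𝔥) (hT : ∀ z ∈ Z, ∀ w ∈ Z, T z - T w = (w - z) • (T w ∘L R z))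
    {z w : ℂ} (hz : z ∈ Z) (hz' : (starRingEnd ℂ) z ∈ Z) (hw : (starRingEnd ℂ) w ∈ Z) :
    2 * |z.im| * ‖G T z‖ ^ 2
      ≤ ‖(starRingEnd ℂ) z - w‖ * ‖T ((starRingEnd ℂ) z) ∘L G T w‖
        + ‖w - z‖ * ‖T z ∘L G T w‖ := by
  have hcoeff : ‖(starRingEnd ℂ) z - z‖ = 2 * |z.im| := by
    rw [norm_sub_rev, Complex.sub_conj, norm_mul, Complex.norm_I, mul_one, Complex.norm_real,
      Real.norm_eq_abs, abs_mul, abs_two]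
  calc 2 * |z.im| * ‖G T z‖ ^ 2
      = ‖((starRingEnd ℂ) z - z) • (adjoint (G T z) ∘L G T z)‖ := by
        rw [norm_smul, norm_adjoint_comp_self, hcoeff, sq, mul_assoc]
    _ = ‖((starRingEnd ℂ) z - w) • (T ((starRingEnd ℂ) z) ∘L G T w)
          + (w - z) • (T z ∘L G T w)‖ := by
        rw [smul_adjoint_G_comp_G Z R hRadj T hT hz hz' hw]
    _ ≤ _ := by
        grw [norm_add_le, norm_smul, norm_smul]

lemma abs_im_mul_norm_G_sq_le {V : Type*} [NormedAddCommGroup V] [NormedSpace ℂ V]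
    (Z : Set ℂ) (R : ℂ → H →L[ℂ] H)
    (hRadj : ∀ z ∈ Z, adjoint (R z) = R ((starRingEnd ℂ) z))
    (T : ℂ → H →L[ℂ] 𝔥) (hT : ∀ z ∈ Z, ∀ w ∈ Z, T z - T w = (w - z) • (T w ∘L R z))
    (j : V →L[ℂ] H) {μ : ℝ} (hμ : (μ : ℂ) ∈ Z)
    (Ghat : 𝔥 →L[ℂ] V) (hfact : G T (μ : ℂ) = j ∘L Ghat)
    {z : ℂ} (hz : z ∈ Z) (hz' : (starRingEnd ℂ) z ∈ Z) :
    |z.im| * ‖G T z‖ ^ 2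
      ≤ 1 / 2 * ‖(μ : ℂ) - z‖ * ‖Ghat‖
        * (‖T z ∘L j‖ + ‖T ((starRingEnd ℂ) z) ∘L j‖) := by
  have hconj_sub : ‖(starRingEnd ℂ) z - μ‖ = ‖(μ : ℂ) - z‖ := by
    rw [← Complex.norm_conj, map_sub, Complex.conj_conj, Complex.conj_ofReal, norm_sub_rev]
  have hcomp (S : H →L[ℂ] 𝔥) : ‖S ∘L G T μ‖ ≤ ‖S ∘L j‖ * ‖Ghat‖ := by
    rw [hfact, ← comp_assoc]
    exact opNorm_comp_le _ _
  have h := two_mul_abs_im_mul_norm_G_sq_le Z R hRadj T hT hz hz'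
    (by rwa [Complex.conj_ofReal])
  rw [hconj_sub] at h
  grw [hcomp, hcomp] at h
  linarith

theorem statement12_general
    (Z : Set ℂ)
    (R : ℂ → H →L[ℂ] H)
    (hRadj : ∀ z ∈ Z, adjoint (R z) = R ((starRingEnd ℂ) z))
    (T : ℂ → H →L[ℂ] 𝔥)
    (hT : ∀ z ∈ Z, ∀ w ∈ Z, T z - T w = (w - z) • (T w ∘L R z))
    (j : W →L[ℂ] H)
    (μ : ℝ) (hμ : (μ : ℂ) ∈ Z)
    (Ghat : 𝔥 →L[ℂ] W) (hfact : G T (μ : ℂ) = j ∘L Ghat) :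
    ∀ lam : ℝ, ∀ ε : ℝ, 0 < ε →
      ((lam : ℂ) + ε * Complex.I) ∈ Z → ((lam : ℂ) - ε * Complex.I) ∈ Z →
      (ε * ‖G T ((lam : ℂ) + ε * Complex.I)‖ ^ 2
          ≤ (1/2) * (|μ - lam| + ε) * ‖Ghat‖
            * (‖T ((lam : ℂ) + ε * Complex.I) ∘L j‖
                + ‖T ((lam : ℂ) - ε * Complex.I) ∘L j‖))
      ∧ (ε * ‖G T ((lam : ℂ) - ε * Complex.I)‖ ^ 2
          ≤ (1/2) * (|μ - lam| + ε) * ‖Ghat‖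
            * (‖T ((lam : ℂ) + ε * Complex.I) ∘L j‖
                + ‖T ((lam : ℂ) - ε * Complex.I) ∘L j‖)) := by
  intro lam ε hε hp hm
  have hbound : ∀ z ∈ Z, (starRingEnd ℂ) z ∈ Z → z.re = lam → |z.im| = ε →
      ε * ‖G T z‖ ^ 2 ≤ 1 / 2 * (|μ - lam| + ε) * ‖Ghat‖
        * (‖T z ∘L j‖ + ‖T ((starRingEnd ℂ) z) ∘L j‖) := by
    intro z hz hz' hre him
    have hdist : ‖(μ : ℂ) - z‖ ≤ |μ - lam| + ε := by
      grw [Complex.norm_le_abs_re_add_abs_im]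
      simp [hre, him]
    grw [← hdist, ← him]
    exact abs_im_mul_norm_G_sq_le Z R hRadj T hT j hμ Ghat hfact hz hz'
  have hconj_p : (starRingEnd ℂ) ((lam : ℂ) + ε * Complex.I) = lam - ε * Complex.I := by
    simp [Complex.ext_iff]
  have hconj_m : (starRingEnd ℂ) ((lam : ℂ) - ε * Complex.I) = lam + ε * Complex.I := by
    simp
  have hp' := hbound _ hp (hconj_p ▸ hm) (by simp) (by simp [hε.le])
  have hm' := hbound _ hm (hconj_m ▸ hp) (by simp) (by simp [hε.le])
  rw [hconj_p] at hp'
  rw [hconj_m, add_comm (‖_‖)] at hm'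
  exact ⟨hp', hm'⟩

/-- The estimate (eps) in the proof of Theorem 3.9 of the paper: if `G_μ` factors
through a Hilbert space `W` (the weighted space `L²_φ`) as `G_μ = j ∘ Ĝ_μ`, then
`ε ‖G_{λ±iε}‖² ≤ (1/2)(|μ−λ|+ε) ‖Ĝ_μ‖ (‖T_{λ+iε} ∘ j‖ + ‖T_{λ−iε} ∘ j‖)`. -/
theorem statement12
    (Z : Set ℂ) (hZne : Z.Nonempty) (hZconj : ∀ z ∈ Z, (starRingEnd ℂ) z ∈ Z)
    (R : ℂ → H →L[ℂ] H)
    (hRres : ∀ z ∈ Z, ∀ w ∈ Z, R z - R w = (w - z) • (R w ∘L R z))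
    (hRadj : ∀ z ∈ Z, adjoint (R z) = R ((starRingEnd ℂ) z))
    (T : ℂ → H →L[ℂ] 𝔥)
    (hT : ∀ z ∈ Z, ∀ w ∈ Z, T z - T w = (w - z) • (T w ∘L R z))
    (j : W →L[ℂ] H)
    (μ : ℝ) (hμ : (μ : ℂ) ∈ Z)
    (Ghat : 𝔥 →L[ℂ] W) (hfact : G T (μ : ℂ) = j ∘L Ghat) :
    ∀ lam : ℝ, ∀ ε : ℝ, 0 < ε →
      ((lam : ℂ) + ε * Complex.I) ∈ Z → ((lam : ℂ) - ε * Complex.I) ∈ Z →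
      (ε * ‖G T ((lam : ℂ) + ε * Complex.I)‖ ^ 2
          ≤ (1/2) * (|μ - lam| + ε) * ‖Ghat‖
            * (‖T ((lam : ℂ) + ε * Complex.I) ∘L j‖
                + ‖T ((lam : ℂ) - ε * Complex.I) ∘L j‖))
      ∧ (ε * ‖G T ((lam : ℂ) - ε * Complex.I)‖ ^ 2
          ≤ (1/2) * (|μ - lam| + ε) * ‖Ghat‖
            * (‖T ((lam : ℂ) + ε * Complex.I) ∘L j‖
                + ‖T ((lam : ℂ) - ε * Complex.I) ∘L j‖)) :=
  statement12_general Z R hRadj T hT j μ hμ Ghat hfact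
end

section
/- Let Z' ⊆ Z be nonempty and closed under complex conjugation and let M : Z' → B(𝔥) satisfy (M_z)* = M_{z̄} and M_z − M_w = (z − w)·(G_{w̄})* ∘ G_z for all z, w ∈ Z'. Then: (a) for every z ∈ Z', M_z − (M_z)* = (z − z̄)·(G_z)* ∘ G_z; (b) if θ ∈ B(𝔥) is self-adjoint, z ∈ Z' has nonzero imaginary part, and G_z is injective, then M_z − θ is injective. -/
open ContinuousLinearMap

variable {H 𝔥 : Type*}
  [NormedAddCommGroup H] [InnerProductSpace ℂ H] [CompleteSpace H]
  [NormedAddCommGroup 𝔥] [InnerProductSpace ℂ 𝔥] [CompleteSpace 𝔥]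

/- Pairing `A x = 0` with `x` gives `0 = ⟪x, (A - A†) x⟫ = c ‖B x‖²`. -/
theorem injective_of_sub_adjoint_eq_smul_adjoint_comp_self {A : 𝔥 →L[ℂ] 𝔥} {B : 𝔥 →L[ℂ] H}
    {c : ℂ} (hc : c ≠ 0) (hB : Function.Injective B)
    (hA : A - adjoint A = c • (adjoint B ∘L B)) : Function.Injective A := by
  refine (injective_iff_map_eq_zero A).mpr fun x hx => ?_
  have hpair : inner ℂ x ((A - adjoint A) x) = c * inner ℂ (B x) (B x) := by
    rw [hA, smul_apply, comp_apply, inner_smul_right, adjoint_inner_right]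
  rw [sub_apply, inner_sub_right, adjoint_inner_right, hx, inner_zero_left, inner_zero_right,
    sub_zero, eq_comm, mul_eq_zero, inner_self_eq_zero] at hpair
  exact hB <| by rw [hpair.resolve_left hc, map_zero]

theorem injective_sub_selfAdjoint_of_sub_adjoint_eq_smul_adjoint_comp_self
    {A θ : 𝔥 →L[ℂ] 𝔥} {B : 𝔥 →L[ℂ] H} {c : ℂ} (hc : c ≠ 0) (hθ : IsSelfAdjoint θ)
    (hB : Function.Injective B) (hA : A - adjoint A = c • (adjoint B ∘L B)) :
    Function.Injective (A - θ) := by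
  refine injective_of_sub_adjoint_eq_smul_adjoint_comp_self hc hB ?_
  rw [map_sub, hθ.adjoint_eq, ← hA]
  abel

theorem sub_adjoint_eq_of_adjoint_eq_conj {M : ℂ → 𝔥 →L[ℂ] 𝔥} {G : ℂ → 𝔥 →L[ℂ] H} {z : ℂ}
    (hMadj : adjoint (M z) = M ((starRingEnd ℂ) z))
    (hMres : M z - M ((starRingEnd ℂ) z)
      = (z - (starRingEnd ℂ) z) • (adjoint (G ((starRingEnd ℂ) ((starRingEnd ℂ) z))) ∘L G z)) :
    M z - adjoint (M z) = (z - (starRingEnd ℂ) z) • (adjoint (G z) ∘L G z) := by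
  rwa [Complex.conj_conj, ← hMadj] at hMres

theorem sub_conj_ne_zero {z : ℂ} (hz : z.im ≠ 0) : z - (starRingEnd ℂ) z ≠ 0 :=
  sub_ne_zero.mpr fun h => hz (Complex.conj_eq_iff_im.mp h.symm)

theorem statement14_general
    (T : ℂ → H →L[ℂ] 𝔥)
    (Z' : Set ℂ)
    (hZ'conj : ∀ z ∈ Z', (starRingEnd ℂ) z ∈ Z')
    (M : ℂ → 𝔥 →L[ℂ] 𝔥)
    (hMadj : ∀ z ∈ Z', adjoint (M z) = M ((starRingEnd ℂ) z))
    (hMres : ∀ z ∈ Z', ∀ w ∈ Z',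
      M z - M w = (z - w) • (adjoint (G T ((starRingEnd ℂ) w)) ∘L G T z)) :
    (∀ z ∈ Z',
        M z - adjoint (M z)
          = (z - (starRingEnd ℂ) z) • (adjoint (G T z) ∘L G T z))
    ∧ (∀ θ : 𝔥 →L[ℂ] 𝔥, IsSelfAdjoint θ →
        ∀ z ∈ Z', z.im ≠ 0 → Function.Injective (G T z) →
          Function.Injective (M z - θ)) := by
  have hImM : ∀ z ∈ Z',
      M z - adjoint (M z) = (z - (starRingEnd ℂ) z) • (adjoint (G T z) ∘L G T z) :=
    fun z hz => sub_adjoint_eq_of_adjoint_eq_conj (hMadj z hz) (hMres z hz _ (hZ'conj z hz))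
  refine ⟨hImM, fun θ hθ z hz him hG => ?_⟩
  exact injective_sub_selfAdjoint_of_sub_adjoint_eq_smul_adjoint_comp_self
    (sub_conj_ne_zero him) hθ hG (hImM z hz)

/-- Core of the proof of Lemma 5.9 of the paper: for a Weyl-type family `M` one has
(a) `M_z − M_z* = (z − z̄) G_z* G_z`, and (b) if `θ` is self-adjoint, `Im z ≠ 0` and
`G_z` is injective, then `M_z − θ` is injective. -/
theorem statement14
    (Z : Set ℂ) (hZne : Z.Nonempty) (hZconj : ∀ z ∈ Z, (starRingEnd ℂ) z ∈ Z)
    (R : ℂ → H →L[ℂ] H)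
    (hRres : ∀ z ∈ Z, ∀ w ∈ Z, R z - R w = (w - z) • (R w ∘L R z))
    (hRadj : ∀ z ∈ Z, adjoint (R z) = R ((starRingEnd ℂ) z))
    (T : ℂ → H →L[ℂ] 𝔥)
    (hT : ∀ z ∈ Z, ∀ w ∈ Z, T z - T w = (w - z) • (T w ∘L R z))
    (Z' : Set ℂ) (hZ'sub : Z' ⊆ Z) (hZ'ne : Z'.Nonempty)
    (hZ'conj : ∀ z ∈ Z', (starRingEnd ℂ) z ∈ Z')
    (M : ℂ → 𝔥 →L[ℂ] 𝔥)
    (hMadj : ∀ z ∈ Z', adjoint (M z) = M ((starRingEnd ℂ) z))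
    (hMres : ∀ z ∈ Z', ∀ w ∈ Z',
      M z - M w = (z - w) • (adjoint (G T ((starRingEnd ℂ) w)) ∘L G T z)) :
    (∀ z ∈ Z',
        M z - adjoint (M z)
          = (z - (starRingEnd ℂ) z) • (adjoint (G T z) ∘L G T z))
    ∧ (∀ θ : 𝔥 →L[ℂ] 𝔥, IsSelfAdjoint θ →
        ∀ z ∈ Z', z.im ≠ 0 → Function.Injective (G T z) →
          Function.Injective (M z - θ)) :=
  statement14_general T Z' hZ'conj M hMadj hMres
end
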